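/- Let K be a unital based ring of finite rank with basis {b_i}_{i∈I} and involution i ↦ i*. Then the matrix M indexed by I × I, whose (j,k)-entry is the coefficient of b_k in the expansion of (Σ_{i∈I} b_i·b_{i*})·b_j in the distinguished basis, is a symmetric positive definite matrix (as a real matrix). -/

import Mathlib

/-- A unital based ring of finite rank, presented by its structure constants:
a ring free of finite rank over ℤ with distinguished basis `{b_i}_{i ∈ I}` containing
the unit, nonnegative structure constants `c i j k` (so `b_i · b_j = Σ_k c i j k • b_k`),
and an involution `i ↦ i*` of `I` inducing an anti-automorphism of the ring and such
that the coefficient of `1` in `b_i · b_j` is `1` if `j = i*` and `0` otherwise. -/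
structure BasedRingData (I : Type*) [Fintype I] [DecidableEq I] where
  /-- structure constants: `b_i · b_j = Σ_k (c i j k) • b_k` -/
  c : I → I → I → ℤ
  /-- the index of the unit element among the basis -/
  one : I
  /-- the involution `i ↦ i*` -/
  star : I → I
  nonneg : ∀ i j k, 0 ≤ c i j k
  one_mul : ∀ i k, c one i k = if k = i then 1 else 0
  mul_one : ∀ i k, c i one k = if k = i then 1 else 0
  assoc : ∀ i j k t, ∑ s, c i j s * c s k t = ∑ s, c j k s * c i s t
  star_involutive : Function.Involutive star
  /-- the involution induces an anti-automorphism `b_i ↦ b_{i*}` -/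
  star_anti : ∀ i j k, c i j k = c (star j) (star i) (star k)
  /-- the coefficient of `1` in `b_i · b_j` is `1` if `j = i*` and `0` otherwise -/
  coeff_one : ∀ i j, c i j one = if j = star i then 1 else 0


/-!
Frobenius reciprocity `c_{ij}^k = c_{j,k*}^{i*}` turns the entries of `M` into
`Σ_i Σ_s c_{ij}^s c_{ik}^s`, so `M = Σ_i L_iᵀ L_i` where `L_i` is the matrix of left
multiplication by `b_i`. Each summand is positive semidefinite and `L_1 = 1`, so `M` is the
identity plus a positive semidefinite matrix.
-/

open scoped Matrix

namespace BasedRingData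

variable {I : Type*} [Fintype I] [DecidableEq I] (K : BasedRingData I)

/-- Compare the coefficients of `1` in `(b_i b_j) b_{k*} = b_i (b_j b_{k*})`. -/
theorem c_eq_c_star (i j k : I) : K.c i j k = K.c j (K.star k) (K.star i) := by
  have h := K.assoc i j (K.star k) K.one
  simp only [K.coeff_one, mul_ite, _root_.mul_one, mul_zero, K.star_involutive.injective.eq_iff,
    Finset.sum_ite_eq', Finset.sum_ite_eq, Finset.mem_univ, if_true] at h
  simpa [eq_comm] using h

theorem c_star_right (i k s : I) : K.c s (K.star k) i = K.c i k s := by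
  rw [K.c_eq_c_star s (K.star k) i, ← K.star_anti]

theorem sum_c_star_mul_c (j k : I) :
    ∑ i, ∑ s, K.c i (K.star i) s * K.c s j k = ∑ i, ∑ s, K.c i j s * K.c i k s :=
  calc ∑ i, ∑ s, K.c i (K.star i) s * K.c s j k
      = ∑ i, ∑ s, K.c (K.star i) j s * K.c s (K.star k) (K.star i) := by
        refine Fintype.sum_congr _ _ fun i => ?_
        simp only [K.assoc i (K.star i) j k, ← K.c_eq_c_star]
    _ = ∑ i, ∑ s, K.c i j s * K.c s (K.star k) i :=
        Fintype.sum_equiv K.star_involutive.toPerm _ _ fun i => rfl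
    _ = ∑ i, ∑ s, K.c i j s * K.c i k s := by
        simp only [c_star_right]

def leftMulMatrix (R : Type*) [Ring R] (i : I) : Matrix I I R :=
  Matrix.of fun s j => (K.c i j s : R)

theorem leftMulMatrix_one (R : Type*) [Ring R] : K.leftMulMatrix R K.one = 1 := by
  ext s j
  simp [leftMulMatrix, K.one_mul, Matrix.one_apply]

theorem sum_transpose_mul_leftMulMatrix (R : Type*) [CommRing R] (j k : I) :
    (∑ i, (K.leftMulMatrix R i)ᵀ * K.leftMulMatrix R i) j k =
      ∑ i, ∑ s, (K.c i (K.star i) s : R) * K.c s j k := by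
  simp only [Matrix.sum_apply, Matrix.mul_apply, Matrix.transpose_apply, leftMulMatrix,
    Matrix.of_apply]
  exact_mod_cast congrArg ((↑) : ℤ → R) (K.sum_c_star_mul_c j k).symm

end BasedRingData

theorem Matrix.posDef_sum_conjTranspose_mul_self {ι n R : Type*} [Fintype ι] [Fintype n]
    [DecidableEq n] [CommRing R] [PartialOrder R] [StarRing R] [StarOrderedRing R]
    [NoZeroDivisors R] (A : ι → Matrix n n R) (i₀ : ι) (h₀ : A i₀ = 1) :
    (∑ i, (A i)ᴴ * A i).PosDef := by
  classical
  rw [← Finset.add_sum_erase _ _ (Finset.mem_univ i₀), h₀, Matrix.conjTranspose_one,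
    Matrix.one_mul]
  exact PosDef.one.add_posSemidef
    (posSemidef_sum _ fun i _ => posSemidef_conjTranspose_mul_self (A i))

/-- for a unital based ring `K` of finite rank, the real matrix `M` whose
`(j,k)`-entry is the coefficient of `b_k` in `(Σ_i b_i · b_{i*}) · b_j` is symmetric
positive definite. -/
theorem stmt_4 (I : Type*) [Fintype I] [DecidableEq I] (K : BasedRingData I)
    (M : Matrix I I ℝ)
    (hM : ∀ j k, M j k = ∑ i, ∑ s, (K.c i (K.star i) s : ℝ) * (K.c s j k : ℝ)) :
    M.IsSymm ∧ M.PosDef := by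
  have hM_gram : M = ∑ i, (K.leftMulMatrix ℝ i)ᴴ * K.leftMulMatrix ℝ i := by
    ext j k
    simp only [Matrix.conjTranspose_eq_transpose_of_trivial, hM,
      K.sum_transpose_mul_leftMulMatrix]
  have hpos : M.PosDef := hM_gram ▸
    Matrix.posDef_sum_conjTranspose_mul_self _ K.one (K.leftMulMatrix_one ℝ)
  exact ⟨Matrix.isHermitian_iff_isSymm.mp hpos.isHermitian, hpos⟩
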